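/- arXiv:2603.03666 — 2 statements merged into one kernel-verified Lean document; each statement's English description precedes it below -/
import Mathlib

section
/- Let d ≥ 2, let e ≥ 4 be an even integer, and let (v_k)_{k∈Λ} be a finite nonempty family of nonzero vectors in ℤ^d. Then for every dyadic integer λ ≥ 1 there exist positive integers (σ_k)_{k∈Λ} and a dyadic integer σ with σ > 50·λ^e such that for every k ∈ Λ, every point m ∈ ℝ^d lying in the closed ball of radius 2λ centered at σ_k·v_k or in the closed ball of radius 2λ centered at −σ_k·v_k satisfies σ/2 < |m| < (9/10)·σ. In particular, all the balls B(±σ_k v_k, 2λ) are contained in the annulus {m ∈ ℤ^d : σ/2 < |m| < (9/10)σ}. -/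
/-- **Arithmetic lemma** (placement of oscillation frequencies in a dyadic shell).
Let `d ≥ 2`, let `e ≥ 4` be an even integer, and let `(v k)` be a finite nonempty
family of nonzero vectors in `ℤ^d` (with `vR k` the corresponding vector of
`EuclideanSpace ℝ (Fin d)`). Then for every dyadic integer `λ ≥ 1` there exist
positive integers `σk k` and a dyadic integer `σ > 50 λ^e` such that every point
of the closed ball of radius `2λ` around `± (σk k) • v k` lies in the annulus
`{m : σ/2 < ‖m‖ < (9/10) σ}`. -/
theorem arithmetic_lemma
    (d : ℕ) (hd : 2 ≤ d) (e : ℕ) (he : 4 ≤ e) (heEven : Even e)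
    (Λ : Type) [Fintype Λ] [Nonempty Λ]
    (v : Λ → Fin d → ℤ) (hv : ∀ k, v k ≠ 0)
    (vR : Λ → EuclideanSpace ℝ (Fin d)) (hvR : ∀ k i, vR k i = (v k i : ℝ))
    (lam : ℕ) (hlam : ∃ a : ℕ, lam = 2 ^ a) :
    ∃ (σk : Λ → ℕ) (σ : ℕ),
      (∀ k, 0 < σk k) ∧ (∃ a : ℕ, σ = 2 ^ a) ∧ 50 * lam ^ e < σ ∧
      ∀ (k : Λ) (m : EuclideanSpace ℝ (Fin d)),
        (‖m - (σk k : ℝ) • vR k‖ ≤ 2 * lam ∨ ‖m + (σk k : ℝ) • vR k‖ ≤ 2 * lam) →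
        (σ : ℝ) / 2 < ‖m‖ ∧ ‖m‖ < (9 / 10 : ℝ) * σ := by
  obtain ⟨a, ha⟩ := hlam
  have hlam1 : 1 ≤ lam := ha ▸ Nat.one_le_two_pow
  -- each vector has real norm at least 1
  have hnk1 : ∀ k, 1 ≤ ‖vR k‖ := by
    intro k
    obtain ⟨i, hi⟩ := Function.ne_iff.1 (hv k)
    have hi' : v k i ≠ 0 := by simpa using hi
    have h1 : (1 : ℝ) ≤ |vR k i| := by
      rw [hvR k i]
      have h2 : (1 : ℤ) ≤ |v k i| := Int.one_le_abs hi'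
      calc (1:ℝ) = ((1:ℤ):ℝ) := by norm_num
        _ ≤ ((|v k i| : ℤ) : ℝ) := by exact_mod_cast h2
        _ = |((v k i : ℤ) : ℝ)| := by push_cast; ring
    calc (1:ℝ) ≤ |vR k i| := h1
      _ = Real.sqrt (‖vR k i‖^2) := by
          rw [Real.norm_eq_abs, Real.sqrt_sq_eq_abs, abs_abs]
      _ ≤ ‖vR k‖ := by
        rw [EuclideanSpace.norm_eq]
        exact Real.sqrt_le_sqrt
          (Finset.single_le_sum (f := fun j => ‖vR k j‖^2)
            (fun j _ => by positivity) (Finset.mem_univ i))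
  -- bound on norms
  set B : ℝ := Finset.univ.sup' Finset.univ_nonempty (fun k => ‖vR k‖) with hBdef
  have hB : ∀ k, ‖vR k‖ ≤ B := fun k =>
    Finset.le_sup' (fun k => ‖vR k‖) (Finset.mem_univ k)
  have hB1 : 1 ≤ B := le_trans (hnk1 (Classical.arbitrary Λ)) (hB _)
  -- choose N
  obtain ⟨N, hN⟩ := pow_unbounded_of_one_lt
    (max (50 * (lam:ℝ) ^ e) (20 * (B + lam))) (by norm_num : (1:ℝ) < 2)
  have hS1 : 50 * (lam:ℝ) ^ e < 2 ^ N := lt_of_le_of_lt (le_max_left _ _) hN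
  have hS2 : 20 * (B + lam) < 2 ^ N := lt_of_le_of_lt (le_max_right _ _) hN
  set S : ℝ := (2:ℝ) ^ N with hSdef
  have hSpos : (0:ℝ) < S := by positivity
  refine ⟨fun k => ⌊7 * S / (10 * ‖vR k‖)⌋₊, 2 ^ N, ?_, ⟨N, rfl⟩, ?_, ?_⟩
  · intro k
    have hnk := hnk1 k
    have : (1:ℝ) ≤ 7 * S / (10 * ‖vR k‖) := by
      rw [le_div_iff₀ (by linarith)]
      have : ‖vR k‖ ≤ B := hB k
      have hlamR : (1:ℝ) ≤ (lam:ℝ) := by exact_mod_cast hlam1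
      nlinarith
    exact Nat.floor_pos.2 this
  · have : ((2:ℕ) ^ N : ℝ) = S := by push_cast [hSdef]; ring
    exact_mod_cast (by push_cast; linarith : ((50 * lam ^ e : ℕ) : ℝ) < ((2^N : ℕ) : ℝ))
  · intro k m hm
    set c : ℕ := ⌊7 * S / (10 * ‖vR k‖)⌋₊ with hc
    have hnk := hnk1 k
    have hnkpos : (0:ℝ) < ‖vR k‖ := by linarith
    have hdivnn : (0:ℝ) ≤ 7 * S / (10 * ‖vR k‖) := by positivity
    have hcu : (c:ℝ) ≤ 7 * S / (10 * ‖vR k‖) := Nat.floor_le hdivnn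
    have hcl : 7 * S / (10 * ‖vR k‖) < (c:ℝ) + 1 := Nat.lt_floor_add_one _
    have hcu' : (c:ℝ) * ‖vR k‖ ≤ 7 * S / 10 := by
      rw [le_div_iff₀ (by linarith : (0:ℝ) < 10 * ‖vR k‖)] at hcu
      linarith
    have hcl' : 7 * S / 10 - ‖vR k‖ < (c:ℝ) * ‖vR k‖ := by
      rw [div_lt_iff₀ (by linarith : (0:ℝ) < 10 * ‖vR k‖)] at hcl
      nlinarith
    have hcnorm : ‖(c:ℝ) • vR k‖ = (c:ℝ) * ‖vR k‖ := by
      rw [norm_smul, Real.norm_eq_abs, abs_of_nonneg (by positivity)]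
    have hlamR : (1:ℝ) ≤ (lam:ℝ) := by exact_mod_cast hlam1
    have hBk : ‖vR k‖ ≤ B := hB k
    have key : ∀ x : EuclideanSpace ℝ (Fin d), ‖x - (c:ℝ) • vR k‖ ≤ 2 * lam →
        (S / 2 < ‖x‖ ∧ ‖x‖ < (9/10) * S) := by
      intro x hx
      have h1 : ‖(c:ℝ) • vR k‖ - ‖x - (c:ℝ) • vR k‖ ≤ ‖x‖ := by
        have := norm_sub_norm_le ((c:ℝ) • vR k) x
        have h2 := norm_sub_rev x ((c:ℝ) • vR k)
        linarith [norm_sub_norm_le ((c:ℝ) • vR k) x, h2 ▸ this]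
      have h2 : ‖x‖ ≤ ‖(c:ℝ) • vR k‖ + ‖x - (c:ℝ) • vR k‖ := by
        calc ‖x‖ = ‖(c:ℝ) • vR k + (x - (c:ℝ) • vR k)‖ := by congr 1; abel
          _ ≤ _ := norm_add_le _ _
      rw [hcnorm] at h1 h2
      constructor
      · nlinarith
      · nlinarith
    have hcast : ((2 ^ N : ℕ) : ℝ) = S := by push_cast [hSdef]; ring
    rw [hcast]
    rcases hm with hm | hm
    · exact key m hm
    · have := key (-m) (by rwa [show -m - (c:ℝ) • vR k = -(m + (c:ℝ) • vR k) by abel,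
        norm_neg])
      rwa [norm_neg] at this
end

section
/- Let e ≥ 4 be an even integer, let λ ≥ 1 be a dyadic integer, and let c be a positive integer. Then there exist integers l ≥ 1 and j ≥ 1 such that 55·c·(3·λ^e)^l < 2^j < 81·c·(3·λ^e)^l. -/
/-- Core lemma: a power of 2 lies strictly between `55·c·3^l` and `81·c·3^l`
for some `l ≥ 1`. -/
theorem pow_two_between_core (c : ℕ) (hc : 0 < c) :
    ∃ l j : ℕ, 1 ≤ l ∧ 1 ≤ j ∧ 55 * c * 3 ^ l < 2 ^ j ∧ 2 ^ j < 81 * c * 3 ^ l := by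
  have hA0 : 165 * c ≠ 0 := by positivity
  set j0 := Nat.log 2 (165 * c) with hj0
  have h1 : 2 ^ j0 ≤ 165 * c := Nat.pow_log_le_self 2 hA0
  have h2 : 165 * c < 2 ^ (j0 + 1) := Nat.lt_pow_succ_log_self (by norm_num) _
  by_cases hs : ∃ k ≤ 23, 165 * c * 3 ^ (12 * k) < 2 ^ (j0 + 19 * k + 1) ∧
      2 ^ (j0 + 19 * k + 1) < 243 * c * 3 ^ (12 * k)
  · obtain ⟨k, -, hL, hR⟩ := hs
    refine ⟨1 + 12 * k, j0 + 19 * k + 1, by omega, by omega, ?_, ?_⟩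
    · have h : 55 * c * 3 ^ (1 + 12 * k) = 165 * c * 3 ^ (12 * k) := by
        rw [pow_add]; ring
      rw [h]; exact hL
    · have h : 81 * c * 3 ^ (1 + 12 * k) = 243 * c * 3 ^ (12 * k) := by
        rw [pow_add]; ring
      rw [h]; exact hR
  · exfalso
    push_neg at hs
    have key : ∀ k, k ≤ 23 →
        2 ^ (j0 + 19 * k) ≤ 165 * c * 3 ^ (12 * k) ∧
        165 * c * 3 ^ (12 * k) < 2 ^ (j0 + 19 * k + 1) := by
      intro k
      induction k with
      | zero => intro _; simpa using ⟨h1, h2⟩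
      | succ n ih =>
        intro hn
        obtain ⟨ih1, ih2⟩ := ih (by omega)
        have hfail := hs n (by omega) ih2
        have hX : 0 < 2 ^ (j0 + 19 * n) := Nat.pow_pos (by norm_num)
        have e1 : 2 ^ (j0 + 19 * (n + 1)) = 524288 * 2 ^ (j0 + 19 * n) := by
          rw [show j0 + 19 * (n + 1) = 19 + (j0 + 19 * n) by ring, pow_add]
          norm_num
        have e2 : 2 ^ (j0 + 19 * (n + 1) + 1) = 1048576 * 2 ^ (j0 + 19 * n) := by
          rw [show j0 + 19 * (n + 1) + 1 = 20 + (j0 + 19 * n) by ring, pow_add]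
          norm_num
        have e3 : 165 * c * 3 ^ (12 * (n + 1)) = 531441 * (165 * c * 3 ^ (12 * n)) := by
          rw [show 12 * (n + 1) = 12 + 12 * n by ring, pow_add]
          ring
        have e4 : 2 ^ (j0 + 19 * n + 1) = 2 * 2 ^ (j0 + 19 * n) := by
          rw [pow_succ]; ring
        rw [e4] at ih2 hfail
        have e5 : 243 * c * 3 ^ (12 * n) = 243 * (c * 3 ^ (12 * n)) := by ring
        have e6 : 165 * c * 3 ^ (12 * n) = 165 * (c * 3 ^ (12 * n)) := by ring
        rw [e5] at hfail
        rw [e6] at ih1 ih2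
        constructor
        · rw [e1, e3, e6]; nlinarith
        · rw [e2, e3, e6]; nlinarith
    have hfin := hs 23 le_rfl (key 23 le_rfl).2
    -- hfail at k = 23 : 243 * c * 3^276 ≤ 2^(j0 + 438)
    have hle : 2 ^ (j0 + 19 * 23 + 1) ≤ 2 ^ 438 * (165 * c) := by
      calc 2 ^ (j0 + 19 * 23 + 1) = 2 ^ 438 * 2 ^ j0 := by
            rw [show j0 + 19 * 23 + 1 = 438 + j0 by ring, pow_add]
          _ ≤ 2 ^ 438 * (165 * c) := Nat.mul_le_mul_left _ h1
    have hcontr : 243 * c * 3 ^ (12 * 23) ≤ 2 ^ 438 * (165 * c) := le_trans hfin hle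
    have hnum : 2 ^ 438 * 165 < 243 * 3 ^ (12 * 23) := by decide
    have : c * (2 ^ 438 * 165) < c * (243 * 3 ^ (12 * 23)) :=
      Nat.mul_lt_mul_of_le_of_lt (le_refl c) hnum hc
    have h' : c * (243 * 3 ^ (12 * 23)) ≤ c * (2 ^ 438 * 165) := by
      calc c * (243 * 3 ^ (12 * 23)) = 243 * c * 3 ^ (12 * 23) := by ring
        _ ≤ 2 ^ 438 * (165 * c) := hcontr
        _ = c * (2 ^ 438 * 165) := by ring
    omega

/-- Existence of a power of 2 in the interval `(55·c·(3λ^e)^l, 81·c·(3λ^e)^l)`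
for some `l ≥ 1`, where `e ≥ 4` is even, `λ ≥ 1` is dyadic, and `c ≥ 1`. -/
theorem pow_two_between
    (e : ℕ) (he : 4 ≤ e) (heEven : Even e)
    (lam : ℕ) (hlam : ∃ a : ℕ, lam = 2 ^ a)
    (c : ℕ) (hc : 0 < c) :
    ∃ (l j : ℕ), 1 ≤ l ∧ 1 ≤ j ∧
      55 * c * (3 * lam ^ e) ^ l < 2 ^ j ∧ 2 ^ j < 81 * c * (3 * lam ^ e) ^ l := by
  obtain ⟨a, rfl⟩ := hlam
  obtain ⟨l, j, hl, hj, hlt1, hlt2⟩ := pow_two_between_core c hc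
  have hP : 0 < (2 : ℕ) ^ (a * e * l) := Nat.pow_pos (by norm_num)
  have hrw : ((3 : ℕ) * (2 ^ a) ^ e) ^ l = 3 ^ l * 2 ^ (a * e * l) := by
    rw [mul_pow, ← pow_mul, ← pow_mul, mul_assoc]
  have hpj : (2 : ℕ) ^ (j + a * e * l) = 2 ^ j * 2 ^ (a * e * l) := by
    rw [pow_add]
  refine ⟨l, j + a * e * l, hl, by omega, ?_, ?_⟩
  · rw [hrw, hpj, show 55 * c * (3 ^ l * 2 ^ (a * e * l)) = 55 * c * 3 ^ l * 2 ^ (a * e * l) by ring]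
    exact Nat.mul_lt_mul_of_lt_of_le hlt1 (le_refl _) hP
  · rw [hrw, hpj, show 81 * c * (3 ^ l * 2 ^ (a * e * l)) = 81 * c * 3 ^ l * 2 ^ (a * e * l) by ring]
    exact Nat.mul_lt_mul_of_lt_of_le hlt2 (le_refl _) hP
end
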